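/- Let g₀ ∈ Matₙ(ℝ) be symmetric and positive definite, let A ∈ Matₙ(ℝ) with tr(A) = 0, let f : ℝ → ℝ be a twice differentiable function, and define g(u) := exp(f(u)·A)·g₀·exp(f(u)·Aᵀ). Then for every u ∈ ℝ, tr( (1/4)·(g(u)⁻¹·g'(u))² − (1/2)·g(u)⁻¹·g''(u) ) = −(1/4)·tr( (A + g₀·Aᵀ·g₀⁻¹)² )·f'(u)². -/

import Mathlib

/-! With `L X = A X + X Aᵀ`, the orbit satisfies `g' = f' L g`, hence `g'' = f'' L g + f'² L (L g)`.
For any invertible `g`, `tr (g⁻¹ L g) = 2 tr A = 0`, and `tr ((g⁻¹ L g)²) = tr (g⁻¹ L (L g))`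
since both expand to `tr A² + 2 tr (g⁻¹ A g Aᵀ) + tr Aᵀ²`; so the Ricci coefficient is
`-(1/4) f'² tr ((g⁻¹ L g)²)`. Finally, as `exp (f A)` commutes with `A` and `exp (f Aᵀ)` with `Aᵀ`,
`g⁻¹ L g` is conjugate, by `exp (f Aᵀ)` and then by `g₀`, to `A + g₀ Aᵀ g₀⁻¹`. -/

open Matrix

attribute [local instance] Matrix.frobeniusNormedAddCommGroup Matrix.frobeniusNormedSpace

noncomputable def reparamOrbitCurve {n : ℕ} (g₀ A : Matrix (Fin n) (Fin n) ℝ) (f : ℝ → ℝ) :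
    ℝ → Matrix (Fin n) (Fin n) ℝ :=
  fun u => NormedSpace.exp (f u • A) * g₀ * NormedSpace.exp (f u • Aᵀ)

attribute [local instance] Matrix.frobeniusNormedRing Matrix.frobeniusNormedAlgebra

namespace Matrix

variable {m R : Type*} [Fintype m] [DecidableEq m] [CommRing R]

theorem trace_inv_mul_mul_add_mul {g : Matrix m m R} (hg : IsUnit g) (A B : Matrix m m R) :
    (g⁻¹ * (A * g + g * B)).trace = A.trace + B.trace := by
  rw [Matrix.mul_add, trace_add, ← mul_assoc, trace_conj' hg,
    nonsing_inv_mul_cancel_left g _ ((isUnit_iff_isUnit_det g).mp hg)]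

theorem trace_sq_inv_mul_mul_add_mul {g : Matrix m m R} (hg : IsUnit g) (A B : Matrix m m R) :
    ((g⁻¹ * (A * g + g * B)) ^ 2).trace =
      (g⁻¹ * (A * (A * g + g * B) + (A * g + g * B) * B)).trace := by
  have hdet := (isUnit_iff_isUnit_det g).mp hg
  set C := g⁻¹ * A * g
  have hlin : g⁻¹ * (A * g + g * B) = C + B := by
    rw [Matrix.mul_add, ← mul_assoc, nonsing_inv_mul_cancel_left g _ hdet]
  have hquad :
      g⁻¹ * (A * (A * g + g * B) + (A * g + g * B) * B) = C * C + C * B + C * B + B * B := by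
    simp only [C, Matrix.mul_add, Matrix.add_mul, mul_assoc, mul_nonsing_inv_cancel_left g _ hdet,
      nonsing_inv_mul_cancel_left g _ hdet]
    abel
  rw [hlin, hquad, sq, Matrix.add_mul, Matrix.mul_add, Matrix.mul_add]
  simp only [trace_add, trace_mul_comm B C]
  ring

theorem trace_sq_inv_mul_conj {P : Matrix m m R} (hP : IsUnit P) (X : Matrix m m R) :
    ((P⁻¹ * X * P) ^ 2).trace = (X ^ 2).trace := by
  rw [sq, sq, ← trace_conj' hP (X * X)]
  simp only [mul_assoc, mul_nonsing_inv_cancel_left P _ ((isUnit_iff_isUnit_det P).mp hP)]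

theorem inv_mul_mul_add_mul_eq_conj {E g₀ F A B : Matrix m m R} (hE : IsUnit E)
    (hAE : Commute A E) (hBF : Commute B F) :
    (E * g₀ * F)⁻¹ * (A * (E * g₀ * F) + (E * g₀ * F) * B) =
      F⁻¹ * (g₀⁻¹ * (A * g₀ + g₀ * B)) * F := by
  have hcomm : A * (E * g₀ * F) + (E * g₀ * F) * B = E * ((A * g₀ + g₀ * B) * F) := by
    simp only [Matrix.mul_add, Matrix.add_mul, mul_assoc, hBF.eq]
    rw [← mul_assoc A E, hAE.eq, mul_assoc]
  rw [hcomm, mul_inv_rev, mul_inv_rev]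
  simp only [mul_assoc]
  rw [nonsing_inv_mul_cancel_left E _ ((isUnit_iff_isUnit_det E).mp hE)]

theorem trace_sq_inv_mul_mul_add_mul_of_commute {E g₀ F A B : Matrix m m R} (hE : IsUnit E)
    (hg₀ : IsUnit g₀) (hF : IsUnit F) (hAE : Commute A E) (hBF : Commute B F) :
    (((E * g₀ * F)⁻¹ * (A * (E * g₀ * F) + (E * g₀ * F) * B)) ^ 2).trace =
      ((A + g₀ * B * g₀⁻¹) ^ 2).trace := by
  have hg₀conj : g₀⁻¹ * (A * g₀ + g₀ * B) = g₀⁻¹ * (A + g₀ * B * g₀⁻¹) * g₀ := by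
    rw [mul_assoc, Matrix.add_mul,
      nonsing_inv_mul_cancel_right g₀ _ ((isUnit_iff_isUnit_det g₀).mp hg₀)]
  rw [inv_mul_mul_add_mul_eq_conj hE hAE hBF, trace_sq_inv_mul_conj hF, hg₀conj,
    trace_sq_inv_mul_conj hg₀]

end Matrix

section RosenPlaneWave

variable {m : Type*} [Fintype m] [DecidableEq m]

/-- The coefficient of `du ⊗ du` in the Ricci tensor of the Rosen wave `2 du dv - dxᵀ g(u) dx`. -/
noncomputable def rosenRicciCoeff (g : ℝ → Matrix m m ℝ) (u : ℝ) : ℝ :=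
  ((1/4 : ℝ) • ((g u)⁻¹ * deriv g u) ^ 2 - (1/2 : ℝ) • ((g u)⁻¹ * deriv (deriv g) u)).trace

theorem rosenRicciCoeff_eq_of_hasDerivAt {c : ℝ → Matrix m m ℝ} {A B : Matrix m m ℝ}
    {f' f'' : ℝ → ℝ} {u : ℝ} (hc : ∀ v, HasDerivAt c (f' v • (A * c v + c v * B)) v)
    (hf' : HasDerivAt f' (f'' u) u) (hcu : IsUnit (c u)) (htr : A.trace + B.trace = 0) :
    rosenRicciCoeff c u = -(1/4) * (((c u)⁻¹ * (A * c u + c u * B)) ^ 2).trace * f' u ^ 2 := by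
  have hderiv : deriv c = fun v => f' v • (A * c v + c v * B) := funext fun v => (hc v).deriv
  have hLc : HasDerivAt (fun v => A * c v + c v * B)
      (f' u • (A * (A * c u + c u * B) + (A * c u + c u * B) * B)) u := by
    refine (((hc u).const_mul A).add ((hc u).mul_const B)).congr_deriv ?_
    rw [Matrix.mul_smul, Matrix.smul_mul, smul_add]
  have hderiv2 : deriv (deriv c) u =
      f' u • f' u • (A * (A * c u + c u * B) + (A * c u + c u * B) * B) +
        f'' u • (A * c u + c u * B) := by
    rw [hderiv]
    exact (hf'.smul hLc).deriv
  have hfirst : (((c u)⁻¹ * deriv c u) ^ 2).trace =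
      f' u ^ 2 * (((c u)⁻¹ * (A * c u + c u * B)) ^ 2).trace := by
    rw [hderiv, mul_smul_comm, smul_pow, trace_smul, smul_eq_mul]
  have hsecond : ((c u)⁻¹ * deriv (deriv c) u).trace =
      f' u ^ 2 * (((c u)⁻¹ * (A * c u + c u * B)) ^ 2).trace := by
    rw [hderiv2, Matrix.mul_add, mul_smul_comm, mul_smul_comm, mul_smul_comm, trace_add,
      trace_smul, trace_smul, trace_smul, trace_inv_mul_mul_add_mul hcu, htr,
      trace_sq_inv_mul_mul_add_mul hcu, smul_eq_mul, smul_eq_mul, smul_zero, add_zero,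
      ← mul_assoc, sq]
  rw [rosenRicciCoeff, trace_sub, trace_smul, trace_smul, hfirst, hsecond, smul_eq_mul, smul_eq_mul]
  ring

end RosenPlaneWave

theorem hasDerivAt_reparamOrbitCurve {n : ℕ} (g₀ A : Matrix (Fin n) (Fin n) ℝ) {f : ℝ → ℝ}
    {f'u u : ℝ} (hf : HasDerivAt f f'u u) :
    HasDerivAt (reparamOrbitCurve g₀ A f)
      (f'u • (A * reparamOrbitCurve g₀ A f u + reparamOrbitCurve g₀ A f u * Aᵀ)) u := by
  have hE := (hasDerivAt_exp_smul_const' (𝕂 := ℝ) A (f u)).scomp u hf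
  have hF := (hasDerivAt_exp_smul_const (𝕂 := ℝ) Aᵀ (f u)).scomp u hf
  refine ((hE.mul_const g₀).mul hF).congr_deriv ?_
  simp only [reparamOrbitCurve, Function.comp_def, smul_add, Matrix.smul_mul, Matrix.mul_smul,
    mul_assoc]
  -- the two sides differ only in which of the defeq Frobenius instances they use
  rfl

theorem ricci_of_reparam_orbit_general {n : ℕ} (g₀ A : Matrix (Fin n) (Fin n) ℝ)
    (hpos : g₀.PosDef) (htr : A.trace = 0)
    (f f' f'' : ℝ → ℝ)
    (hf : ∀ u, HasDerivAt f (f' u) u)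
    (hf' : ∀ u, HasDerivAt f' (f'' u) u) (u : ℝ) :
    ((1/4 : ℝ) • ((reparamOrbitCurve g₀ A f u)⁻¹ * deriv (reparamOrbitCurve g₀ A f) u) ^ 2 -
     (1/2 : ℝ) • ((reparamOrbitCurve g₀ A f u)⁻¹ *
        deriv (deriv (reparamOrbitCurve g₀ A f)) u)).trace
    = -(1/4) * ((A + g₀ * Aᵀ * g₀⁻¹) ^ 2).trace * f' u ^ 2 := by
  have hE : IsUnit (NormedSpace.exp (f u • A)) := isUnit_exp _
  have hF : IsUnit (NormedSpace.exp (f u • Aᵀ)) := isUnit_exp _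
  have hAE : Commute A (NormedSpace.exp (f u • A)) := ((Commute.refl A).smul_right (f u)).exp_right
  have hAF : Commute Aᵀ (NormedSpace.exp (f u • Aᵀ)) :=
    ((Commute.refl Aᵀ).smul_right (f u)).exp_right
  calc rosenRicciCoeff (reparamOrbitCurve g₀ A f) u
      = -(1/4) * (((reparamOrbitCurve g₀ A f u)⁻¹ * (A * reparamOrbitCurve g₀ A f u +
          reparamOrbitCurve g₀ A f u * Aᵀ)) ^ 2).trace * f' u ^ 2 :=
        rosenRicciCoeff_eq_of_hasDerivAt (fun v => hasDerivAt_reparamOrbitCurve g₀ A (hf v))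
          (hf' u) ((hE.mul hpos.isUnit).mul hF) (by rw [trace_transpose, htr, add_zero])
    _ = -(1/4) * ((A + g₀ * Aᵀ * g₀⁻¹) ^ 2).trace * f' u ^ 2 := by
        rw [reparamOrbitCurve, trace_sq_inv_mul_mul_add_mul_of_commute hE hpos.isUnit hF hAE hAF]

/-- For `g₀` symmetric positive definite, `A` trace-free, `f` twice
differentiable, and `g(u) = exp(f(u)A) g₀ exp(f(u)Aᵀ)`, the Ricci coefficient
`tr((1/4)(g⁻¹g')² − (1/2)g⁻¹g'')` equals `−(1/4) tr((A + g₀Aᵀg₀⁻¹)²) f'(u)²`. -/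
theorem ricci_of_reparam_orbit {n : ℕ} (g₀ A : Matrix (Fin n) (Fin n) ℝ)
    (hsym : g₀ᵀ = g₀) (hpos : g₀.PosDef) (htr : A.trace = 0)
    (f f' f'' : ℝ → ℝ)
    (hf : ∀ u, HasDerivAt f (f' u) u)
    (hf' : ∀ u, HasDerivAt f' (f'' u) u) (u : ℝ) :
    ((1/4 : ℝ) • ((reparamOrbitCurve g₀ A f u)⁻¹ * deriv (reparamOrbitCurve g₀ A f) u) ^ 2 -
     (1/2 : ℝ) • ((reparamOrbitCurve g₀ A f u)⁻¹ *
        deriv (deriv (reparamOrbitCurve g₀ A f)) u)).trace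
    = -(1/4) * ((A + g₀ * Aᵀ * g₀⁻¹) ^ 2).trace * f' u ^ 2 :=
  ricci_of_reparam_orbit_general g₀ A hpos htr f f' f'' hf hf' u
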